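/- arXiv:2508.04690 — 2 statements merged into one kernel-verified Lean document; each statement's English description precedes it below -/
import Mathlib

section
/- Let ℓ be a natural number and let u be a smooth real-valued function on an open set U ⊆ ℝ² containing (−1,1) × {0} which satisfies (Lu)(τ, ρ) + ℓ(ℓ+1) u(τ, ρ) = 0 for all (τ, ρ) ∈ U, where L is the reduced conformal wave operator. Then for every natural number p, the function a_p(τ) := (∂_ρ^p u)(τ, 0) satisfies the Jacobi-type ODE with parameters (p, ℓ) on (−1,1). -/
/-- Partial derivative in the first variable (`τ`). -/
noncomputable def pdT (u : ℝ → ℝ → ℝ) : ℝ → ℝ → ℝ :=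
  fun τ ρ => deriv (fun s => u s ρ) τ

/-- Partial derivative in the second variable (`ρ`). -/
noncomputable def pdR (u : ℝ → ℝ → ℝ) : ℝ → ℝ → ℝ :=
  fun τ ρ => deriv (fun s => u τ s) ρ

/-- The reduced conformal wave operator
`(Lu)(τ,ρ) = (1−τ²)∂_τ²u + 2τρ ∂_τ∂_ρ u − ρ² ∂_ρ² u − 2τ ∂_τ u`. -/
noncomputable def Lop (u : ℝ → ℝ → ℝ) : ℝ → ℝ → ℝ :=
  fun τ ρ => (1 - τ ^ 2) * pdT (pdT u) τ ρ + 2 * τ * ρ * pdT (pdR u) τ ρ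
    - ρ ^ 2 * pdR (pdR u) τ ρ - 2 * τ * pdT u τ ρ

/-!
Differentiating `Lu + ℓ(ℓ+1)u = 0` `q` times in `ρ`, and commuting the partial derivatives of the
smooth function `u`, shows that `∂_ρ^q u` is annihilated by the operator `jacobiOp q (ℓ(ℓ+1))`.
Its `∂_ρ` and `∂_ρ²` terms carry a factor `ρ`, so on `ρ = 0` it is the Jacobi-type ODE with
parameters `(q, ℓ)`.
-/

open Function Filter Set
open scoped ContDiff

section PartialDerivatives

variable {v w : ℝ → ℝ → ℝ} {U : Set (ℝ × ℝ)} {n : WithTop ℕ∞} {τ ρ : ℝ}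

lemma hasDerivAt_pdR (hv : DifferentiableAt ℝ (uncurry v) (τ, ρ)) :
    HasDerivAt (fun s => v τ s) (pdR v τ ρ) ρ := by
  have h : DifferentiableAt ℝ (fun s => v τ s) ρ :=
    hv.comp ρ ((differentiableAt_const τ).prodMk differentiableAt_id)
  exact h.hasDerivAt

lemma pdT_eq_fderiv (hv : DifferentiableAt ℝ (uncurry v) (τ, ρ)) :
    pdT v τ ρ = fderiv ℝ (uncurry v) (τ, ρ) (1, 0) := by
  have hline : HasDerivAt (fun s : ℝ => (s, ρ)) ((1 : ℝ), (0 : ℝ)) τ :=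
    (hasDerivAt_id τ).prodMk (hasDerivAt_const τ ρ)
  exact (hv.hasFDerivAt.comp_hasDerivAt τ hline).deriv

lemma pdR_eq_fderiv (hv : DifferentiableAt ℝ (uncurry v) (τ, ρ)) :
    pdR v τ ρ = fderiv ℝ (uncurry v) (τ, ρ) (0, 1) := by
  have hline : HasDerivAt (fun s : ℝ => (τ, s)) ((0 : ℝ), (1 : ℝ)) ρ :=
    (hasDerivAt_const ρ τ).prodMk (hasDerivAt_id ρ)
  exact (hv.hasFDerivAt.comp_hasDerivAt ρ hline).deriv

lemma eqOn_uncurry_pdT (hU : IsOpen U) (hv : ContDiffOn ℝ n (uncurry v) U) (hn : n ≠ 0) :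
    EqOn (uncurry (pdT v)) (fun x => fderiv ℝ (uncurry v) x (1, 0)) U :=
  fun _ hx => pdT_eq_fderiv ((hv.differentiableOn hn).differentiableAt (hU.mem_nhds hx))

lemma eqOn_uncurry_pdR (hU : IsOpen U) (hv : ContDiffOn ℝ n (uncurry v) U) (hn : n ≠ 0) :
    EqOn (uncurry (pdR v)) (fun x => fderiv ℝ (uncurry v) x (0, 1)) U :=
  fun _ hx => pdR_eq_fderiv ((hv.differentiableOn hn).differentiableAt (hU.mem_nhds hx))

lemma contDiffOn_pdT (hU : IsOpen U) (hv : ContDiffOn ℝ (n + 1) (uncurry v) U) :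
    ContDiffOn ℝ n (uncurry (pdT v)) U :=
  ((hv.fderiv_of_isOpen hU le_rfl).clm_apply contDiffOn_const).congr
    (eqOn_uncurry_pdT hU hv (by simp))

lemma contDiffOn_pdR (hU : IsOpen U) (hv : ContDiffOn ℝ (n + 1) (uncurry v) U) :
    ContDiffOn ℝ n (uncurry (pdR v)) U :=
  ((hv.fderiv_of_isOpen hU le_rfl).clm_apply contDiffOn_const).congr
    (eqOn_uncurry_pdR hU hv (by simp))

lemma fderiv_fderiv_apply_eq (hU : IsOpen U) (hv : ContDiffOn ℝ 2 (uncurry v) U)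
    {x : ℝ × ℝ} (hx : x ∈ U) (d e : ℝ × ℝ) :
    fderiv ℝ (fun y => fderiv ℝ (uncurry v) y e) x d
      = fderiv ℝ (fderiv ℝ (uncurry v)) x d e := by
  have hd : DifferentiableAt ℝ (fderiv ℝ (uncurry v)) x :=
    ((hv.fderiv_of_isOpen hU (m := 1) le_rfl).differentiableOn one_ne_zero).differentiableAt
      (hU.mem_nhds hx)
  rw [(hd.hasFDerivAt.clm_apply (hasFDerivAt_const e x)).fderiv]
  simp

lemma pdR_pdT_eq_pdT_pdR (hU : IsOpen U) (hv : ContDiffOn ℝ 2 (uncurry v) U)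
    (hx : (τ, ρ) ∈ U) : pdR (pdT v) τ ρ = pdT (pdR v) τ ρ := by
  have hdiff : ∀ {w : ℝ → ℝ → ℝ}, ContDiffOn ℝ 1 (uncurry w) U →
      DifferentiableAt ℝ (uncurry w) (τ, ρ) := fun hw =>
    (hw.differentiableOn one_ne_zero).differentiableAt (hU.mem_nhds hx)
  have hsymm : IsSymmSndFDerivAt ℝ (uncurry v) (τ, ρ) :=
    (hv.contDiffAt (hU.mem_nhds hx)).isSymmSndFDerivAt (by simp)
  rw [pdR_eq_fderiv (hdiff (contDiffOn_pdT hU hv)), pdT_eq_fderiv (hdiff (contDiffOn_pdR hU hv)),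
    ((eqOn_uncurry_pdT hU hv (by simp)).eventuallyEq_of_mem (hU.mem_nhds hx)).fderiv_eq,
    ((eqOn_uncurry_pdR hU hv (by simp)).eventuallyEq_of_mem (hU.mem_nhds hx)).fderiv_eq,
    fderiv_fderiv_apply_eq hU hv hx, fderiv_fderiv_apply_eq hU hv hx, hsymm]

lemma pdT_congr (hU : IsOpen U) (h : EqOn (uncurry v) (uncurry w) U) (hx : (τ, ρ) ∈ U) :
    pdT v τ ρ = pdT w τ ρ := by
  refine EventuallyEq.deriv_eq ?_
  have hline : Continuous fun s : ℝ => (s, ρ) := continuous_id.prodMk continuous_const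
  filter_upwards [(hU.preimage hline).mem_nhds hx] with s hs using h hs

lemma pdR_congr (hU : IsOpen U) (h : EqOn (uncurry v) (uncurry w) U) (hx : (τ, ρ) ∈ U) :
    pdR v τ ρ = pdR w τ ρ := by
  refine EventuallyEq.deriv_eq ?_
  have hline : Continuous fun s : ℝ => (τ, s) := continuous_const.prodMk continuous_id
  filter_upwards [(hU.preimage hline).mem_nhds hx] with s hs using h hs

end PartialDerivatives

noncomputable def jacobiOp (q lam : ℝ) (v : ℝ → ℝ → ℝ) : ℝ → ℝ → ℝ := fun τ ρ =>
  (1 - τ ^ 2) * pdT (pdT v) τ ρ + 2 * τ * ρ * pdT (pdR v) τ ρ + 2 * (q - 1) * τ * pdT v τ ρ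
    - ρ ^ 2 * pdR (pdR v) τ ρ - 2 * q * ρ * pdR v τ ρ + (lam - q * (q - 1)) * v τ ρ

section JacobiOp

variable {v : ℝ → ℝ → ℝ} {U : Set (ℝ × ℝ)} {lam : ℝ}

lemma jacobiOp_zero (lam : ℝ) (v : ℝ → ℝ → ℝ) (τ ρ : ℝ) :
    jacobiOp 0 lam v τ ρ = Lop v τ ρ + lam * v τ ρ := by
  simp only [jacobiOp, Lop]
  ring

lemma pdR_jacobiOp (q : ℝ) (hU : IsOpen U) (hv : ContDiffOn ℝ 3 (uncurry v) U)
    {τ ρ : ℝ} (hx : (τ, ρ) ∈ U) :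
    pdR (jacobiOp q lam v) τ ρ = jacobiOp (q + 1) lam (pdR v) τ ρ := by
  have hv2 : ContDiffOn ℝ 2 (uncurry v) U := hv.of_le (by norm_num)
  have hvT : ContDiffOn ℝ 2 (uncurry (pdT v)) U := contDiffOn_pdT hU hv
  have hvR : ContDiffOn ℝ 2 (uncurry (pdR v)) U := contDiffOn_pdR hU hv
  have hderiv : ∀ {w : ℝ → ℝ → ℝ}, ContDiffOn ℝ 1 (uncurry w) U →
      HasDerivAt (fun s => w τ s) (pdR w τ ρ) ρ := fun hw =>
    hasDerivAt_pdR ((hw.differentiableOn one_ne_zero).differentiableAt (hU.mem_nhds hx))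
  have hTT := hderiv (contDiffOn_pdT hU hvT)
  have hTR := hderiv (contDiffOn_pdT hU hvR)
  have hT := hderiv (hvT.of_le (by norm_num))
  have hRR := hderiv (contDiffOn_pdR hU hvR)
  have hR := hderiv (hvR.of_le (by norm_num))
  have h0 := hderiv (hv.of_le (by norm_num))
  have hlin : HasDerivAt (fun s : ℝ => s) 1 ρ := hasDerivAt_id ρ
  have hsq : HasDerivAt (fun s : ℝ => s ^ 2) (2 * ρ) ρ := by
    simpa using hasDerivAt_pow 2 ρ
  have hJ := (((((hTT.const_mul (1 - τ ^ 2)).add ((hlin.const_mul (2 * τ)).mul hTR)).add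
    (hT.const_mul (2 * (q - 1) * τ))).sub (hsq.mul hRR)).sub
    ((hlin.const_mul (2 * q)).mul hR)).add (h0.const_mul (lam - q * (q - 1)))
  have swapT : pdR (pdT v) τ ρ = pdT (pdR v) τ ρ := pdR_pdT_eq_pdT_pdR hU hv2 hx
  have swapTR : pdR (pdT (pdR v)) τ ρ = pdT (pdR (pdR v)) τ ρ := pdR_pdT_eq_pdT_pdR hU hvR hx
  have swapTT : pdR (pdT (pdT v)) τ ρ = pdT (pdT (pdR v)) τ ρ := by
    rw [pdR_pdT_eq_pdT_pdR hU hvT hx]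
    exact pdT_congr hU (fun y hy => pdR_pdT_eq_pdT_pdR hU hv2 hy) hx
  rw [show pdR (jacobiOp q lam v) τ ρ = _ from hJ.deriv, swapT, swapTR, swapTT]
  simp only [jacobiOp]
  ring

lemma contDiffOn_iterate_pdR (hU : IsOpen U) (hv : ContDiffOn ℝ ∞ (uncurry v) U) (q : ℕ) :
    ContDiffOn ℝ ∞ (uncurry (pdR^[q] v)) U := by
  induction q with
  | zero => exact hv
  | succ q ih =>
    rw [iterate_succ_apply']
    exact contDiffOn_pdR hU ih

lemma jacobiOp_iterate_pdR_eq_zero (hU : IsOpen U) (hv : ContDiffOn ℝ ∞ (uncurry v) U)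
    (hL : ∀ x ∈ U, Lop v x.1 x.2 + lam * v x.1 x.2 = 0) (q : ℕ) :
    ∀ x ∈ U, jacobiOp q lam (pdR^[q] v) x.1 x.2 = 0 := by
  induction q with
  | zero =>
    intro x hx
    rw [Nat.cast_zero, iterate_zero_apply, jacobiOp_zero]
    exact hL x hx
  | succ q ih =>
    rintro ⟨τ, ρ⟩ hx
    have hv3 : ContDiffOn ℝ 3 (uncurry (pdR^[q] v)) U :=
      contDiffOn_infty.1 (contDiffOn_iterate_pdR hU hv q) 3
    rw [iterate_succ_apply', Nat.cast_succ, ← pdR_jacobiOp q hU hv3 hx,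
      pdR_congr (v := jacobiOp q lam (pdR^[q] v)) (w := fun _ _ => 0) hU ih hx]
    exact deriv_const ρ 0

end JacobiOp

/-- If `u` is a smooth solution of `Lu + ℓ(ℓ+1)u = 0` on an open set `U` containing
`(−1,1) × {0}`, then for every `p` the restriction `a_p(τ) = (∂_ρ^p u)(τ,0)` satisfies the
Jacobi-type ODE `(1−τ²)a'' + 2(p−1)τ a' + (ℓ(ℓ+1) − p(p−1)) a = 0` on `(−1,1)`. -/
theorem stmt1 (ℓ : ℕ) (U : Set (ℝ × ℝ)) (hUopen : IsOpen U)
    (hUsub : (Set.Ioo (-1 : ℝ) 1 ×ˢ ({0} : Set ℝ)) ⊆ U)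
    (u : ℝ → ℝ → ℝ) (hu : ContDiffOn ℝ (⊤ : ℕ∞) (Function.uncurry u) U)
    (heq : ∀ τ ρ : ℝ, (τ, ρ) ∈ U → Lop u τ ρ + (ℓ : ℝ) * ((ℓ : ℝ) + 1) * u τ ρ = 0)
    (p : ℕ) :
    ∀ τ ∈ Set.Ioo (-1 : ℝ) 1,
      (1 - τ ^ 2) * deriv (deriv (fun s => (pdR^[p] u) s 0)) τ
        + 2 * ((p : ℝ) - 1) * τ * deriv (fun s => (pdR^[p] u) s 0) τ
        + ((ℓ : ℝ) * ((ℓ : ℝ) + 1) - (p : ℝ) * ((p : ℝ) - 1)) * (pdR^[p] u) τ 0 = 0 := by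
  intro τ hτ
  have h := jacobiOp_iterate_pdR_eq_zero hUopen hu (fun x hx => heq x.1 x.2 hx) p (τ, 0)
    (hUsub ⟨hτ, rfl⟩)
  simp only [jacobiOp, pdT] at h
  linear_combination h
end

section
/- Let p ≥ 1 be an integer and define F : (−1,1) → ℝ by F(τ) = (1−τ²)^p ∫₀^τ (1−s²)^{−(p+1)} ds. Then F extends to a function of class C^{p−1} on the closed interval [−1,1], but the p-th derivative of F is unbounded on (0,1). -/
/-!
Differentiating `s (1 - s²)^(-(n+1))` gives the reduction formula
`∫₀^τ (1 - s²)^(-(n+2)) = τ (1 - τ²)^(-(n+1)) / (2n + 2) + (2n + 1)/(2n + 2) ∫₀^τ (1 - s²)^(-(n+1))`,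
so by induction `F = Q + c (1 - τ²)^p (log (1 + τ) - log (1 - τ))` on `(-1, 1)`, with `Q` a
polynomial and `c > 0`.

Since `x^p log x` is `C^(p-1)` on all of `ℝ`, splitting `(1 - τ²)^p = (1 - τ)^p (1 + τ)^p` exhibits
this formula as a `C^(p-1)` function on `ℝ`.

Near `τ = 1` the term `c (1 - τ²)^p log (1 + τ)` is smooth, while differentiating
`(1 - τ)^(m+1) v(τ) log (1 - τ)` (`v` a polynomial) gives a polynomial plus
`(1 - τ)^m w(τ) log (1 - τ)` with `w(1) = -(m + 1) v(1)`. After `p` steps the logarithm survives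
with coefficient `(-1)^p p! (-c 2^p) ≠ 0` at `τ = 1`, so `|F⁽ᵖ⁾| → ∞` as `τ → 1⁻`.
-/

open Real Set Filter Polynomial intervalIntegral
open scoped Topology ContDiff

lemma Polynomial.contDiff_eval (v : ℝ[X]) {n : WithTop ℕ∞} : ContDiff ℝ n (fun x => v.eval x) := by
  have := v.contDiff_aeval (𝕜 := ℝ) n
  simp only [coe_aeval_eq_eval] at this
  exact this

lemma hasDerivAt_pow_succ_mul_log (n : ℕ) {x : ℝ} (hx : x ≠ 0) :
    HasDerivAt (fun x : ℝ => x ^ (n + 1) * log x) ((n + 1) * (x ^ n * log x) + x ^ n) x := by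
  refine ((hasDerivAt_pow (n + 1) x).mul (hasDerivAt_log hx)).congr_deriv ?_
  field_simp
  push_cast
  ring

theorem contDiff_pow_succ_mul_log (n : ℕ) : ContDiff ℝ n (fun x : ℝ => x ^ (n + 1) * log x) := by
  induction n with
  | zero => simpa [contDiff_zero] using continuous_mul_log
  | succ n ih =>
    set f' : ℝ → ℝ := fun x => (n + 1 + 1) * (x ^ (n + 1) * log x) + x ^ (n + 1)
    have hf' : ContDiff ℝ n f' := (contDiff_const.mul ih).add (contDiff_id.pow _)
    have hcont : Continuous (fun x : ℝ => x ^ (n + 1 + 1) * log x) :=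
      (ih.continuous.mul continuous_id).congr fun x => by simp only [Pi.mul_apply, id]; ring
    -- at `x = 0`, where `log` is singular, the derivative comes from the continuity of `f'`
    have hderiv (x : ℝ) : HasDerivAt (fun x : ℝ => x ^ (n + 1 + 1) * log x) (f' x) x := by
      refine hasDerivAt_of_hasDerivAt_of_ne' (x := 0) (fun y hy => ?_) hcont.continuousAt
        hf'.continuous.continuousAt x
      simpa [f'] using hasDerivAt_pow_succ_mul_log (n + 1) hy
    rw [Nat.cast_succ, contDiff_succ_iff_deriv]
    refine ⟨fun x => (hderiv x).differentiableAt, by simp, ?_⟩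
    rwa [funext fun x => (hderiv x).deriv]

lemma one_sub_sq_pos {s : ℝ} (hs : s ∈ Ioo (-1 : ℝ) 1) : 0 < 1 - s ^ 2 := by
  nlinarith [hs.1, hs.2]

lemma uIcc_zero_subset_Ioo {τ : ℝ} (hτ : τ ∈ Ioo (-1 : ℝ) 1) : uIcc 0 τ ⊆ Ioo (-1 : ℝ) 1 :=
  ordConnected_Ioo.uIcc_subset (by norm_num) hτ

lemma intervalIntegrable_inv_one_sub_sq_pow (m : ℕ) {τ : ℝ} (hτ : τ ∈ Ioo (-1 : ℝ) 1) :
    IntervalIntegrable (fun s : ℝ => ((1 - s ^ 2) ^ m)⁻¹) MeasureTheory.volume 0 τ :=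
  ContinuousOn.intervalIntegrable <| (by fun_prop : Continuous fun s : ℝ => (1 - s ^ 2) ^ m)
    |>.continuousOn.inv₀ fun s hs => (pow_pos (one_sub_sq_pos (uIcc_zero_subset_Ioo hτ hs)) m).ne'

lemma integral_inv_one_sub_sq {τ : ℝ} (hτ : τ ∈ Ioo (-1 : ℝ) 1) :
    ∫ s in (0 : ℝ)..τ, (1 - s ^ 2)⁻¹ = (log (1 + τ) - log (1 - τ)) / 2 := by
  have hderiv : ∀ s ∈ uIcc 0 τ, HasDerivAt (fun s => (log (1 + s) - log (1 - s)) / 2)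
      (1 - s ^ 2)⁻¹ s := by
    intro s hs
    obtain ⟨h₁, h₂⟩ := uIcc_zero_subset_Ioo hτ hs
    have hp : HasDerivAt (fun s => log (1 + s)) (1 + s)⁻¹ s := by
      simpa using ((hasDerivAt_id s).const_add 1).log (by simp only [id]; linarith)
    have hm : HasDerivAt (fun s => log (1 - s)) (-1 / (1 - s)) s := by
      simpa using ((hasDerivAt_id s).const_sub 1).log (by simp only [id]; linarith)
    refine ((hp.sub hm).div_const 2).congr_deriv ?_
    rw [show 1 - s ^ 2 = (1 + s) * (1 - s) by ring]
    field_simp [show 1 + s ≠ 0 by linarith, show 1 - s ≠ 0 by linarith]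
    ring
  rw [integral_eq_sub_of_hasDerivAt hderiv
    (by simpa using intervalIntegrable_inv_one_sub_sq_pow 1 hτ)]
  simp

lemma integral_inv_one_sub_sq_pow_add_two (n : ℕ) {τ : ℝ} (hτ : τ ∈ Ioo (-1 : ℝ) 1) :
    ∫ s in (0 : ℝ)..τ, ((1 - s ^ 2) ^ (n + 2))⁻¹ =
      τ / (2 * (n + 1)) * ((1 - τ ^ 2) ^ (n + 1))⁻¹ +
        (2 * n + 1) / (2 * (n + 1)) * ∫ s in (0 : ℝ)..τ, ((1 - s ^ 2) ^ (n + 1))⁻¹ := by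
  have hderiv : ∀ s ∈ uIcc 0 τ,
      HasDerivAt (fun s : ℝ => s / (2 * ((n : ℝ) + 1)) * ((1 - s ^ 2) ^ (n + 1))⁻¹)
        (((1 - s ^ 2) ^ (n + 2))⁻¹ - (2 * n + 1) / (2 * (n + 1)) * ((1 - s ^ 2) ^ (n + 1))⁻¹) s := by
    intro s hs
    have hu := (one_sub_sq_pos (uIcc_zero_subset_Ioo hτ hs)).ne'
    have hpow : HasDerivAt (fun s : ℝ => (1 - s ^ 2) ^ (n + 1))
        ((n + 1 : ℕ) * (1 - s ^ 2) ^ n * (-(2 * s))) s := by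
      simpa using ((hasDerivAt_pow 2 s).const_sub 1).fun_pow (n + 1)
    refine (((hasDerivAt_id s).div_const _).mul (hpow.inv (pow_ne_zero _ hu))).congr_deriv ?_
    simp only [id, Pi.inv_apply, Nat.cast_succ]
    field_simp
    ring
  have h := integral_eq_sub_of_hasDerivAt hderiv ((intervalIntegrable_inv_one_sub_sq_pow _ hτ).sub
    ((intervalIntegrable_inv_one_sub_sq_pow _ hτ).const_mul _))
  rw [integral_sub (intervalIntegrable_inv_one_sub_sq_pow _ hτ)
    ((intervalIntegrable_inv_one_sub_sq_pow _ hτ).const_mul _), integral_const_mul] at h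
  simp only [zero_div, zero_mul, sub_zero] at h
  linarith

theorem exists_pow_mul_integral_eq (n : ℕ) : ∃ c > 0, ∃ Q : ℝ[X], ∀ τ ∈ Ioo (-1 : ℝ) 1,
    (1 - τ ^ 2) ^ n * ∫ s in (0 : ℝ)..τ, ((1 - s ^ 2) ^ (n + 1))⁻¹ =
      Q.eval τ + c * (1 - τ ^ 2) ^ n * (log (1 + τ) - log (1 - τ)) := by
  induction n with
  | zero => exact ⟨1 / 2, by norm_num, 0, fun τ hτ => by simp [integral_inv_one_sub_sq hτ]; ring⟩
  | succ n ih =>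
    obtain ⟨c, hc, Q, hQ⟩ := ih
    set r : ℝ := (2 * n + 1) / (2 * (n + 1))
    refine ⟨r * c, by positivity, C (1 / (2 * ((n : ℝ) + 1))) * X + C r * (1 - X ^ 2) * Q,
      fun τ hτ => ?_⟩
    have hu : 1 - τ ^ 2 ≠ 0 := (one_sub_sq_pos hτ).ne'
    rw [integral_inv_one_sub_sq_pow_add_two n hτ]
    calc (1 - τ ^ 2) ^ (n + 1) * (τ / (2 * (n + 1)) * ((1 - τ ^ 2) ^ (n + 1))⁻¹ +
          r * ∫ s in (0 : ℝ)..τ, ((1 - s ^ 2) ^ (n + 1))⁻¹)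
        = τ / (2 * (n + 1)) + r * (1 - τ ^ 2) *
            ((1 - τ ^ 2) ^ n * ∫ s in (0 : ℝ)..τ, ((1 - s ^ 2) ^ (n + 1))⁻¹) := by
          field_simp
          ring
      _ = _ := by
          rw [hQ τ hτ]
          simp only [eval_add, eval_mul, eval_C, eval_X, eval_sub, eval_pow, eval_one]
          ring

section IterateDeriv

lemma hasDerivAt_one_sub_pow_succ_mul_eval_mul_log (n : ℕ) (v : ℝ[X]) {x : ℝ} (hx : x ≠ 1) :
    HasDerivAt (fun x => (1 - x) ^ (n + 1) * v.eval x * log (1 - x))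
      (-((1 - x) ^ n * v.eval x) +
        (1 - x) ^ n * ((1 - X) * derivative v - C ((n : ℝ) + 1) * v).eval x * log (1 - x)) x := by
  have hx' : 1 - x ≠ 0 := sub_ne_zero.2 hx.symm
  have hsub : HasDerivAt (fun x : ℝ => 1 - x) (-1) x := by simpa using (hasDerivAt_id x).const_sub 1
  refine (((hsub.fun_pow (n + 1)).mul (v.hasDerivAt x)).mul (hsub.log hx')).congr_deriv ?_
  simp only [Pi.mul_apply, eval_sub, eval_mul, eval_one, eval_X, eval_C, Nat.cast_succ,
    Nat.add_sub_cancel]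
  field_simp
  ring

variable {U V : Set ℝ}

lemma eqOn_deriv_add_one_sub_pow_succ_mul_log (hU : IsOpen U) (hU1 : (1 : ℝ) ∉ U)
    {f g : ℝ → ℝ} (hg : DifferentiableOn ℝ g U) {n : ℕ} {v : ℝ[X]}
    (hf : EqOn f (fun x => g x + (1 - x) ^ (n + 1) * v.eval x * log (1 - x)) U) :
    EqOn (deriv f) (fun x => (deriv g x - (1 - x) ^ n * v.eval x) +
      (1 - x) ^ n * ((1 - X) * derivative v - C ((n : ℝ) + 1) * v).eval x * log (1 - x)) U := by
  intro x hx
  have hgx := (hg.differentiableAt (hU.mem_nhds hx)).hasDerivAt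
  rw [(hf.eventuallyEq_of_mem (hU.mem_nhds hx)).deriv_eq,
    (hgx.fun_add (hasDerivAt_one_sub_pow_succ_mul_eval_mul_log n v
      (ne_of_mem_of_not_mem hx hU1))).deriv]
  ring

theorem exists_iterate_deriv_eqOn_add_one_sub_pow_mul_log (hU : IsOpen U) (hU1 : (1 : ℝ) ∉ U)
    (hV : IsOpen V) (hUV : U ⊆ V) (j k : ℕ) {f g : ℝ → ℝ} (hg : ContDiffOn ℝ ∞ g V) {v : ℝ[X]}
    (hf : EqOn f (fun x => g x + (1 - x) ^ (j + k) * v.eval x * log (1 - x)) U) :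
    ∃ g' : ℝ → ℝ, ∃ w : ℝ[X], ContDiffOn ℝ ∞ g' V ∧
      EqOn (deriv^[k] f) (fun x => g' x + (1 - x) ^ j * w.eval x * log (1 - x)) U ∧
      w.eval 1 = (-1) ^ k * (j + k).descFactorial k * v.eval 1 := by
  induction k generalizing f g v with
  | zero => exact ⟨g, v, hg, hf, by simp⟩
  | succ k ih =>
    rw [contDiffOn_infty_iff_deriv_of_isOpen hV] at hg
    obtain ⟨g', w, hg', hfg', hw⟩ := ih
      (hg.2.sub ((((contDiff_const.sub contDiff_id).pow _).mul v.contDiff_eval).contDiffOn))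
      (eqOn_deriv_add_one_sub_pow_succ_mul_log hU hU1 (hg.1.mono hUV) hf)
    refine ⟨g', w, hg', hfg', hw.trans ?_⟩
    rw [← add_assoc, Nat.succ_descFactorial_succ]
    simp only [eval_sub, eval_mul, eval_one, eval_X, eval_C, sub_self, zero_mul]
    push_cast
    ring

end IterateDeriv

lemma tendsto_abs_add_mul_log_one_sub {g w : ℝ → ℝ} (hg : ContinuousAt g 1)
    (hw : ContinuousAt w 1) (hw1 : w 1 ≠ 0) :
    Tendsto (fun x => |g x + w x * log (1 - x)|) (𝓝[<] 1) atTop := by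
  have hsub : Tendsto (fun x : ℝ => 1 - x) (𝓝[<] 1) (𝓝[>] 0) := by
    refine tendsto_nhdsWithin_of_tendsto_nhds_of_eventually_within _
      (((continuous_sub_left 1).tendsto' 1 0 (sub_self 1)).mono_left nhdsWithin_le_nhds) ?_
    filter_upwards [self_mem_nhdsWithin] with x hx using sub_pos.2 (mem_Iio.1 hx)
  have hlog := tendsto_abs_atBot_atTop.comp (tendsto_log_nhdsGT_zero.comp hsub)
  have hmain := (Tendsto.pos_mul_atTop (abs_pos.2 hw1)
    (hw.abs.tendsto.mono_left nhdsWithin_le_nhds) hlog).atTop_add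
    (hg.abs.neg.tendsto.mono_left nhdsWithin_le_nhds)
  refine tendsto_atTop_mono (fun x => ?_) hmain
  have := abs_add_le (g x + w x * log (1 - x)) (-g x)
  simp only [add_neg_cancel_comm, abs_neg, abs_mul] at this
  simp only [Function.comp, Pi.neg_apply]
  linarith

section LogForm

/-- Each logarithm is grouped as `x^p log x` with `x = 1 ± τ`, which is `C^(p-1)` at `x = 0`. -/
noncomputable def logForm (Q : ℝ[X]) (c : ℝ) (p : ℕ) (τ : ℝ) : ℝ :=
  Q.eval τ + c * (1 - τ) ^ p * ((1 + τ) ^ p * log (1 + τ))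
    - c * (1 + τ) ^ p * ((1 - τ) ^ p * log (1 - τ))

variable (Q : ℝ[X]) (c : ℝ)

theorem contDiff_logForm (k : ℕ) : ContDiff ℝ k (logForm Q c (k + 1)) := by
  have h := contDiff_pow_succ_mul_log k
  exact (Q.contDiff_eval.add ((contDiff_const.mul ((contDiff_const.sub contDiff_id).pow _)).mul
    (h.comp (contDiff_const.add contDiff_id)))).sub ((contDiff_const.mul
      ((contDiff_const.add contDiff_id).pow _)).mul (h.comp (contDiff_const.sub contDiff_id)))

theorem tendsto_abs_iterate_deriv_of_eqOn_logForm (hc : c ≠ 0) {p : ℕ} {F : ℝ → ℝ}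
    (hF : EqOn F (logForm Q c p) (Ioo (-1) 1)) :
    Tendsto (fun τ => |deriv^[p] F τ|) (𝓝[<] 1) atTop := by
  have hlog : ContDiffOn ℝ ∞ (fun τ : ℝ => log (1 + τ)) (Ioi (-1)) :=
    (contDiff_const.add contDiff_id).contDiffOn.log fun τ (hτ : -1 < τ) => by
      simp only [id]; linarith
  have hreg : ContDiffOn ℝ ∞ (fun τ => Q.eval τ + c * (1 - τ) ^ p * ((1 + τ) ^ p * log (1 + τ)))
      (Ioi (-1)) :=
    Q.contDiff_eval.contDiffOn.add ((contDiff_const.mul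
      ((contDiff_const.sub contDiff_id).pow p)).contDiffOn.mul
        (((contDiff_const.add contDiff_id).pow p).contDiffOn.mul hlog))
  obtain ⟨g, w, hg, hFp, hw⟩ := exists_iterate_deriv_eqOn_add_one_sub_pow_mul_log isOpen_Ioo
    (by simp) isOpen_Ioi Ioo_subset_Ioi_self 0 p hreg (U := Ioo (-1) 1) (f := F)
    (v := -C c * (1 + X) ^ p) fun τ hτ => by
      rw [hF hτ, logForm]
      simp only [eval_mul, eval_neg, eval_C, eval_pow, eval_add, eval_one, eval_X]
      ring
  refine (tendsto_abs_add_mul_log_one_sub (hg.continuousOn.continuousAt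
    (Ioi_mem_nhds (by norm_num))) w.continuous.continuousAt (by simp [hw, hc])).congr' ?_
  filter_upwards [Ioo_mem_nhdsLT (by norm_num : (-1 : ℝ) < 1)] with τ hτ
  simp [hFp hτ]

end LogForm

/-- For `p ≥ 1`, the function `F(τ) = (1−τ²)^p ∫₀^τ (1−s²)^{−(p+1)} ds` extends to a
function of class `C^{p−1}` on `[−1,1]`, but its `p`-th derivative is unbounded on `(0,1)`. -/
theorem stmt11 (p : ℕ) (hp : 1 ≤ p) :
    let F : ℝ → ℝ := fun τ => (1 - τ ^ 2) ^ p * ∫ s in (0 : ℝ)..τ, ((1 - s ^ 2) ^ (p + 1))⁻¹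
    (∃ G : ℝ → ℝ, ContDiffOn ℝ ((p - 1 : ℕ) : ℕ∞) G (Set.Icc (-1 : ℝ) 1) ∧
      ∀ τ ∈ Set.Ioo (-1 : ℝ) 1, G τ = F τ) ∧
    ¬ ∃ M : ℝ, ∀ τ ∈ Set.Ioo (0 : ℝ) 1, |deriv^[p] F τ| ≤ M := by
  intro F
  obtain ⟨c, hc, Q, hQ⟩ := exists_pow_mul_integral_eq p
  have hF : EqOn F (logForm Q c p) (Ioo (-1) 1) := fun τ hτ => by
    rw [show F τ = _ from hQ τ hτ, logForm,
      show (1 - τ ^ 2) ^ p = (1 - τ) ^ p * (1 + τ) ^ p by rw [← mul_pow]; ring]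
    ring
  refine ⟨?_, fun ⟨M, hM⟩ => ?_⟩
  · obtain ⟨k, rfl⟩ : ∃ k, p = k + 1 := ⟨p - 1, by omega⟩
    exact ⟨logForm Q c (k + 1), by simpa using (contDiff_logForm Q c k).contDiffOn,
      fun τ hτ => (hF hτ).symm⟩
  · have hblow := tendsto_abs_iterate_deriv_of_eqOn_logForm Q c hc.ne' hF
    obtain ⟨τ, hbig, hτ⟩ :=
      ((hblow.eventually_gt_atTop M).and (Ioo_mem_nhdsLT (by norm_num : (0 : ℝ) < 1))).exists
    exact (hM τ hτ).not_gt hbig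
end
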